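/- Let T, V, B₀ ∈ L(H) be trace class, let ρ ∈ ℝ with ρ ≠ 0, and suppose T^#T + ρV^#V is Krein-positive. Then the following are equivalent: (i) there exists X₀ ∈ L(H) such that tr_J((TX₀)^#(TX₀)) + ρ tr_J((VX₀−B₀)^#(VX₀−B₀)) ≤ tr_J((TX)^#(TX)) + ρ tr_J((VX−B₀)^#(VX−B₀)) for every X ∈ L(H); (ii) the equation (T^#T + ρV^#V) X = ρ V^# B₀ admits a solution X ∈ L(H). -/

import Mathlib

open ContinuousLinearMap

noncomputable section

variable {H : Type*} [NormedAddCommGroup H] [InnerProductSpace ℂ H] [CompleteSpace H]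

/-- The Krein adjoint `S^# = J ∘ S* ∘ J` of `S ∈ L(H)` on a Krein space with signature
operator `J`. -/
def kadj (J S : H →L[ℂ] H) : H →L[ℂ] H :=
  J ∘L (ContinuousLinearMap.adjoint S) ∘L J

/-- An operator `S ∈ L(H)` is Krein-positive: `S^# = S` and `[Sx,x] ≥ 0` for all `x`. -/
def KreinPositive (J S : H →L[ℂ] H) : Prop :=
  kadj J S = S ∧ ∀ x : H, 0 ≤ (inner ℂ (J (S x)) x : ℂ).re

/-- `S` is a Hilbert–Schmidt operator (w.r.t. the Hilbert basis `b`; this is in fact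
independent of the basis). -/
def IsHilbertSchmidt {ι : Type*} (b : HilbertBasis ι ℂ H) (S : H →L[ℂ] H) : Prop :=
  Summable fun i => ‖S (b i)‖ ^ 2

/-- `S` is trace class: it is the product of two Hilbert–Schmidt operators. -/
def IsTraceClass {ι : Type*} (b : HilbertBasis ι ℂ H) (S : H →L[ℂ] H) : Prop :=
  ∃ S₁ S₂ : H →L[ℂ] H, IsHilbertSchmidt b S₁ ∧ IsHilbertSchmidt b S₂ ∧ S = S₁ ∘L S₂

/-- The `J`-trace `tr_J(S) = tr(J∘S)` of a (trace-class) operator `S`, computed in the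
Hilbert basis `b`. -/
def trJ {ι : Type*} (J : H →L[ℂ] H) (b : HilbertBasis ι ℂ H) (S : H →L[ℂ] H) : ℝ :=
  ∑' i, (inner ℂ (J (S (b i))) (b i) : ℂ).re

/-!
Write the cost as the sum, over the Hilbert basis `b`, of the column costs
`c_i(x) = [Tx, Tx] + ρ [Vx - B₀ bᵢ, Vx - B₀ bᵢ]` evaluated at `x = X bᵢ`; these series converge
because `T`, `V`, `B₀` are Hilbert–Schmidt and Hilbert–Schmidt operators form a right ideal.
An operator may be modified on a single basis vector, so `X₀` minimises the cost iff every column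
`X₀ bᵢ` minimises `c_i`. With `A = T^#T + ρV^#V` and the symmetric real form `Re [·,·]`,
`c_i(x + y) = c_i(x) + [Ay, y] + 2 Re [Ax - ρV^#B₀ bᵢ, y]`. Scaling `y` shows that at a minimiser
the linear term vanishes, i.e. `A x = ρ V^#B₀ bᵢ`; conversely, if it vanishes, Krein positivity
of `A` makes `x` a minimiser.
-/

open scoped InnerProductSpace

namespace HilbertBasis

variable {𝕜 E F ι : Type*} [RCLike 𝕜] [NormedAddCommGroup E] [InnerProductSpace 𝕜 E]
  [NormedAddCommGroup F] [NormedSpace 𝕜 F] (b : HilbertBasis ι 𝕜 E)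

protected theorem ext_iff {f g : E →L[𝕜] F} : f = g ↔ ∀ i, f (b i) = g (b i) :=
  ⟨fun h i => h ▸ rfl, fun h =>
    ContinuousLinearMap.ext_on (Submodule.dense_iff_topologicalClosure_eq_top.mpr b.dense_span)
      (by rintro _ ⟨i, rfl⟩; exact h i)⟩

theorem exists_apply_eq_update [DecidableEq ι] (Z : E →L[𝕜] F) (i : ι) (x : F) :
    ∃ Y : E →L[𝕜] F, (fun j => Y (b j)) = Function.update (fun j => Z (b j)) i x := by
  refine ⟨Z + (innerSL 𝕜 (b i)).smulRight (x - Z (b i)), funext fun j => ?_⟩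
  rcases eq_or_ne j i with rfl | hji
  · simp [b.orthonormal.1 j]
  · simp [Function.update_of_ne hji, b.orthonormal.inner_eq_zero hji.symm]

theorem hasSum_norm_inner_sq (x : E) : HasSum (fun i => ‖⟪b i, x⟫_𝕜‖ ^ 2) (‖x‖ ^ 2) := by
  simpa [b.repr.norm_map, b.repr_apply_apply] using
    lp.hasSum_norm (p := 2) (by norm_num) (b.repr x)

theorem tsum_enorm_inner_sq (x : E) : ∑' i, ‖⟪b i, x⟫_𝕜‖ₑ ^ 2 = ‖x‖ₑ ^ 2 := by
  have h := b.hasSum_norm_inner_sq x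
  simp_rw [← ofReal_norm, ← ENNReal.ofReal_pow (norm_nonneg _)]
  rw [← ENNReal.ofReal_tsum_of_nonneg (fun i => by positivity) h.summable, h.tsum_eq]

theorem tsum_enorm_apply_sq_adjoint [CompleteSpace E] (S : E →L[𝕜] E) :
    ∑' i, ‖S (b i)‖ₑ ^ 2 = ∑' i, ‖S.adjoint (b i)‖ₑ ^ 2 := by
  calc ∑' i, ‖S (b i)‖ₑ ^ 2 = ∑' i, ∑' j, ‖⟪b j, S (b i)⟫_𝕜‖ₑ ^ 2 := by
        simp_rw [b.tsum_enorm_inner_sq]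
    _ = ∑' j, ∑' i, ‖⟪b i, S.adjoint (b j)⟫_𝕜‖ₑ ^ 2 := by
        rw [ENNReal.tsum_comm]
        simp_rw [← ContinuousLinearMap.adjoint_inner_left S, ← inner_conj_symm (S.adjoint _),
          RCLike.enorm_conj]
    _ = ∑' i, ‖S.adjoint (b i)‖ₑ ^ 2 := by simp_rw [b.tsum_enorm_inner_sq]

end HilbertBasis

section HilbertSchmidt

variable {E ι : Type*} [NormedAddCommGroup E] [InnerProductSpace ℂ E] {b : HilbertBasis ι ℂ E}

theorem isHilbertSchmidt_iff_tsum_enorm_sq_ne_top {S : E →L[ℂ] E} :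
    IsHilbertSchmidt b S ↔ ∑' i, ‖S (b i)‖ₑ ^ 2 ≠ ⊤ := by
  simp_rw [IsHilbertSchmidt, enorm_eq_nnnorm, ← ENNReal.coe_pow,
    ENNReal.tsum_coe_ne_top_iff_summable, ← NNReal.summable_coe, NNReal.coe_pow, coe_nnnorm]

theorem IsHilbertSchmidt.comp_left {S : E →L[ℂ] E} (hS : IsHilbertSchmidt b S)
    (A : E →L[ℂ] E) : IsHilbertSchmidt b (A ∘L S) :=
  (hS.mul_left (‖A‖ ^ 2)).of_nonneg_of_le (fun i => by positivity) fun i => by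
    rw [← mul_pow]
    exact pow_le_pow_left₀ (norm_nonneg _) (A.le_opNorm _) 2

theorem IsHilbertSchmidt.comp_right [CompleteSpace E] {S : E →L[ℂ] E}
    (hS : IsHilbertSchmidt b S) (X : E →L[ℂ] E) : IsHilbertSchmidt b (S ∘L X) := by
  rw [isHilbertSchmidt_iff_tsum_enorm_sq_ne_top] at hS ⊢
  rw [b.tsum_enorm_apply_sq_adjoint, adjoint_comp]
  have hle : ∀ i, ‖(X.adjoint ∘L S.adjoint) (b i)‖ₑ ^ 2 ≤
      ‖X.adjoint‖ₑ ^ 2 * ‖S.adjoint (b i)‖ₑ ^ 2 := fun i => by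
    rw [← mul_pow]
    gcongr
    exact X.adjoint.le_opENorm _
  refine ne_top_of_le_ne_top ?_ (ENNReal.tsum_le_tsum hle)
  rw [ENNReal.tsum_mul_left, ← b.tsum_enorm_apply_sq_adjoint]
  exact ENNReal.mul_ne_top (by simp) hS

theorem IsHilbertSchmidt.sub {S S' : E →L[ℂ] E} (hS : IsHilbertSchmidt b S)
    (hS' : IsHilbertSchmidt b S') : IsHilbertSchmidt b (S - S') :=
  ((hS.mul_left 2).add (hS'.mul_left 2)).of_nonneg_of_le (fun i => by positivity) fun i => by
    have := norm_sub_le (S (b i)) (S' (b i))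
    rw [sub_apply]
    nlinarith [sq_nonneg (‖S (b i)‖ - ‖S' (b i)‖), norm_nonneg (S (b i) - S' (b i))]

theorem IsTraceClass.isHilbertSchmidt {M : E →L[ℂ] E} (hM : IsTraceClass b M) :
    IsHilbertSchmidt b M := by
  obtain ⟨S₁, S₂, -, hS₂, rfl⟩ := hM
  exact hS₂.comp_left S₁

theorem IsHilbertSchmidt.summable_re_inner_apply {S : E →L[ℂ] E} (hS : IsHilbertSchmidt b S)
    (J : E →L[ℂ] E) : Summable fun i => (⟪J (S (b i)), S (b i)⟫_ℂ).re :=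
  (hS.mul_left ‖J‖).of_norm_bounded fun i => by
    calc ‖(⟪J (S (b i)), S (b i)⟫_ℂ).re‖ ≤ ‖⟪J (S (b i)), S (b i)⟫_ℂ‖ := Complex.abs_re_le_norm _
      _ ≤ ‖J (S (b i))‖ * ‖S (b i)‖ := norm_inner_le_norm _ _
      _ ≤ ‖J‖ * ‖S (b i)‖ * ‖S (b i)‖ := by gcongr; exact J.le_opNorm _
      _ = ‖J‖ * ‖S (b i)‖ ^ 2 := by ring

end HilbertSchmidt

section InvolutiveSignature

variable {E : Type*} [NormedAddCommGroup E] [InnerProductSpace ℂ E] {J : E →L[ℂ] E}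

theorem involutive_of_comp_self_eq_one (hJ2 : J ∘L J = 1) : Function.Involutive J :=
  fun x => congr($hJ2 x)

theorem eq_zero_of_forall_re_inner_apply_eq_zero (hJ2 : J ∘L J = 1) {z : E}
    (h : ∀ y, (⟪J z, y⟫_ℂ).re = 0) : z = 0 := by
  have hJz : J z = 0 := re_inner_self_nonpos (𝕜 := ℂ) |>.mp (h (J z)).le
  rw [← involutive_of_comp_self_eq_one hJ2 z, hJz, map_zero]

end InvolutiveSignature

section KreinSpace

variable {J : H →L[ℂ] H}

theorem inner_kadj_apply_left (hJ2 : J ∘L J = 1) (M : H →L[ℂ] H) (x y : H) :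
    ⟪J (kadj J M x), y⟫_ℂ = ⟪J x, M y⟫_ℂ := by
  rw [kadj, comp_apply, comp_apply, involutive_of_comp_self_eq_one hJ2, adjoint_inner_left]

theorem re_inner_apply_comm (hJsa : IsSelfAdjoint J) (u v : H) :
    (⟪J u, v⟫_ℂ).re = (⟪J v, u⟫_ℂ).re := by
  rw [← adjoint_inner_right, hJsa.adjoint_eq, ← inner_conj_symm, Complex.conj_re]

theorem re_inner_apply_add_add (hJsa : IsSelfAdjoint J) (u v : H) :
    (⟪J (u + v), u + v⟫_ℂ).re = (⟪J u, u⟫_ℂ).re + 2 * (⟪J u, v⟫_ℂ).re + (⟪J v, v⟫_ℂ).re := by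
  have := re_inner_apply_comm hJsa v u
  simp only [map_add, inner_add_left, inner_add_right, Complex.add_re]
  linarith

theorem trJ_kadj_comp_self {ι : Type*} (hJ2 : J ∘L J = 1) (b : HilbertBasis ι ℂ H)
    (S : H →L[ℂ] H) : trJ J b (kadj J S ∘L S) = ∑' i, (⟪J (S (b i)), S (b i)⟫_ℂ).re := by
  simp only [trJ, comp_apply, inner_kadj_apply_left hJ2]

end KreinSpace

section SmoothingProblem

variable (J T V : H →L[ℂ] H) (ρ : ℝ)

def gramOp : H →L[ℂ] H :=
  kadj J T ∘L T + (ρ : ℂ) • (kadj J V ∘L V)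

def columnCost (w x : H) : ℝ :=
  (⟪J (T x), T x⟫_ℂ).re + ρ * (⟪J (V x - w), V x - w⟫_ℂ).re

def smoothingCost {ι : Type*} (b : HilbertBasis ι ℂ H) (B₀ X : H →L[ℂ] H) : ℝ :=
  trJ J b (kadj J (T ∘L X) ∘L (T ∘L X)) + ρ * trJ J b (kadj J (V ∘L X - B₀) ∘L (V ∘L X - B₀))

variable {J T V ρ}

theorem re_inner_gramOp_apply (hJ2 : J ∘L J = 1) (x y : H) :
    (⟪J (gramOp J T V ρ x), y⟫_ℂ).re =
      (⟪J (T x), T y⟫_ℂ).re + ρ * (⟪J (V x), V y⟫_ℂ).re := by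
  simp [gramOp, inner_kadj_apply_left hJ2]

theorem columnCost_add (hJsa : IsSelfAdjoint J) (hJ2 : J ∘L J = 1) (w x y : H) :
    columnCost J T V ρ w (x + y) = columnCost J T V ρ w x + (⟪J (gramOp J T V ρ y), y⟫_ℂ).re +
      2 * (⟪J (gramOp J T V ρ x - (ρ : ℂ) • kadj J V w), y⟫_ℂ).re := by
  have hV : V (x + y) - w = (V x - w) + V y := by rw [map_add]; abel
  have hlin : (⟪J (gramOp J T V ρ x - (ρ : ℂ) • kadj J V w), y⟫_ℂ).re =
      (⟪J (T x), T y⟫_ℂ).re + ρ * (⟪J (V x - w), V y⟫_ℂ).re := by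
    simp only [map_sub, map_smul, inner_sub_left, inner_smul_left, Complex.sub_re,
      Complex.conj_ofReal, Complex.re_ofReal_mul, re_inner_gramOp_apply hJ2,
      inner_kadj_apply_left hJ2]
    ring
  rw [columnCost, columnCost, map_add, hV, re_inner_apply_add_add hJsa,
    re_inner_apply_add_add hJsa, re_inner_gramOp_apply hJ2, hlin]
  ring

theorem forall_columnCost_le_iff (hJsa : IsSelfAdjoint J) (hJ2 : J ∘L J = 1)
    (hpos : ∀ y, 0 ≤ (⟪J (gramOp J T V ρ y), y⟫_ℂ).re) (w x₀ : H) :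
    (∀ x, columnCost J T V ρ w x₀ ≤ columnCost J T V ρ w x) ↔
      gramOp J T V ρ x₀ = (ρ : ℂ) • kadj J V w := by
  constructor
  · intro hmin
    rw [← sub_eq_zero]
    refine eq_zero_of_forall_re_inner_apply_eq_zero hJ2 fun y => ?_
    set ℓ := (⟪J (gramOp J T V ρ x₀ - (ρ : ℂ) • kadj J V w), y⟫_ℂ).re
    have hquad : ∀ s : ℝ, 0 ≤ (⟪J (gramOp J T V ρ y), y⟫_ℂ).re * (s * s) + 2 * ℓ * s + 0 := by
      intro s
      have := hmin (x₀ + (s : ℂ) • y)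
      simp only [columnCost_add hJsa hJ2, map_smul, inner_smul_left, inner_smul_right,
        Complex.conj_ofReal, ← mul_assoc, ← Complex.ofReal_mul, Complex.re_ofReal_mul] at this
      linarith
    have := discrim_le_zero hquad
    rw [discrim] at this
    nlinarith [sq_nonneg ℓ]
  · intro heq x
    have := columnCost_add (T := T) (V := V) (ρ := ρ) hJsa hJ2 w x₀ (x - x₀)
    rw [add_sub_cancel, heq, sub_self, map_zero, inner_zero_left, Complex.zero_re, mul_zero,
      add_zero] at this
    linarith [hpos (x - x₀)]

variable {ι : Type*} {B₀ : H →L[ℂ] H} {b : HilbertBasis ι ℂ H}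

theorem hasSum_columnCost (hJ2 : J ∘L J = 1) (hT : IsHilbertSchmidt b T)
    (hV : IsHilbertSchmidt b V) (hB₀ : IsHilbertSchmidt b B₀) (X : H →L[ℂ] H) :
    HasSum (fun i => columnCost J T V ρ (B₀ (b i)) (X (b i))) (smoothingCost J T V ρ b B₀ X) := by
  rw [smoothingCost, trJ_kadj_comp_self hJ2, trJ_kadj_comp_self hJ2]
  exact ((hT.comp_right X).summable_re_inner_apply J).hasSum.add
    ((((hV.comp_right X).sub hB₀).summable_re_inner_apply J).hasSum.mul_left ρ)

theorem forall_smoothingCost_le_iff (hJ2 : J ∘L J = 1) (hT : IsHilbertSchmidt b T)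
    (hV : IsHilbertSchmidt b V) (hB₀ : IsHilbertSchmidt b B₀) (Z : H →L[ℂ] H) :
    (∀ X, smoothingCost J T V ρ b B₀ Z ≤ smoothingCost J T V ρ b B₀ X) ↔
      ∀ i x, columnCost J T V ρ (B₀ (b i)) (Z (b i)) ≤ columnCost J T V ρ (B₀ (b i)) x := by
  classical
  have hZ := hasSum_columnCost (ρ := ρ) hJ2 hT hV hB₀ Z
  refine ⟨fun hmin i x => ?_, fun h X => hasSum_le (fun i => h i (X (b i))) hZ
    (hasSum_columnCost hJ2 hT hV hB₀ X)⟩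
  obtain ⟨Y, hY⟩ := b.exists_apply_eq_update Z i x
  have hcolumns : (fun j => columnCost J T V ρ (B₀ (b j)) (Y (b j))) =
      Function.update (fun j => columnCost J T V ρ (B₀ (b j)) (Z (b j))) i
        (columnCost J T V ρ (B₀ (b i)) x) := by
    funext j
    rw [congr_fun hY j]
    rcases eq_or_ne j i with rfl | hji
    · simp
    · simp [Function.update_of_ne hji]
  have hY := hasSum_columnCost (ρ := ρ) hJ2 hT hV hB₀ Y
  rw [hcolumns] at hY
  have hcost : smoothingCost J T V ρ b B₀ Y = columnCost J T V ρ (B₀ (b i)) x -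
      columnCost J T V ρ (B₀ (b i)) (Z (b i)) + smoothingCost J T V ρ b B₀ Z :=
    ((hZ.update i _).unique hY).symm
  linarith [hmin Y]

end SmoothingProblem

theorem stmt15_general {ι : Type*}
    (J : H →L[ℂ] H) (hJsa : IsSelfAdjoint J) (hJ2 : J ∘L J = 1)
    (b : HilbertBasis ι ℂ H)
    (T V B₀ : H →L[ℂ] H) (ρ : ℝ)
    (hTtc : IsTraceClass b T) (hVtc : IsTraceClass b V) (hB₀tc : IsTraceClass b B₀)
    (hpos : KreinPositive J (kadj J T ∘L T + (ρ : ℂ) • (kadj J V ∘L V))) :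
    (∃ X₀ : H →L[ℂ] H, ∀ X : H →L[ℂ] H,
        trJ J b (kadj J (T ∘L X₀) ∘L (T ∘L X₀)) +
            ρ * trJ J b (kadj J (V ∘L X₀ - B₀) ∘L (V ∘L X₀ - B₀)) ≤
          trJ J b (kadj J (T ∘L X) ∘L (T ∘L X)) +
            ρ * trJ J b (kadj J (V ∘L X - B₀) ∘L (V ∘L X - B₀))) ↔
      (∃ X : H →L[ℂ] H,
        (kadj J T ∘L T + (ρ : ℂ) • (kadj J V ∘L V)) ∘L X =
          (ρ : ℂ) • (kadj J V ∘L B₀)) := by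
  refine exists_congr fun Z => ?_
  calc (∀ X, smoothingCost J T V ρ b B₀ Z ≤ smoothingCost J T V ρ b B₀ X)
      ↔ ∀ i x, columnCost J T V ρ (B₀ (b i)) (Z (b i)) ≤ columnCost J T V ρ (B₀ (b i)) x :=
        forall_smoothingCost_le_iff hJ2 hTtc.isHilbertSchmidt hVtc.isHilbertSchmidt
          hB₀tc.isHilbertSchmidt Z
    _ ↔ ∀ i, gramOp J T V ρ (Z (b i)) = (ρ : ℂ) • kadj J V (B₀ (b i)) :=
        forall_congr' fun i => forall_columnCost_le_iff hJsa hJ2 hpos.2 _ _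
    _ ↔ gramOp J T V ρ ∘L Z = (ρ : ℂ) • (kadj J V ∘L B₀) :=
        (b.ext_iff (f := gramOp J T V ρ ∘L Z) (g := (ρ : ℂ) • (kadj J V ∘L B₀))).symm

/-- for trace-class `T, V, B₀` with `T^#T + ρV^#V` Krein-positive, the
indefinite operator smoothing problem has a solution iff the normal equation
`(T^#T + ρV^#V)X = ρV^#B₀` has a solution. -/
theorem stmt15 {ι : Type*}
    [TopologicalSpace.SeparableSpace H]
    (J : H →L[ℂ] H) (hJsa : IsSelfAdjoint J) (hJ2 : J ∘L J = 1)
    (b : HilbertBasis ι ℂ H)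
    (T V B₀ : H →L[ℂ] H) (ρ : ℝ) (hρ : ρ ≠ 0)
    (hTtc : IsTraceClass b T) (hVtc : IsTraceClass b V) (hB₀tc : IsTraceClass b B₀)
    (hpos : KreinPositive J (kadj J T ∘L T + (ρ : ℂ) • (kadj J V ∘L V))) :
    (∃ X₀ : H →L[ℂ] H, ∀ X : H →L[ℂ] H,
        trJ J b (kadj J (T ∘L X₀) ∘L (T ∘L X₀)) +
            ρ * trJ J b (kadj J (V ∘L X₀ - B₀) ∘L (V ∘L X₀ - B₀)) ≤
          trJ J b (kadj J (T ∘L X) ∘L (T ∘L X)) +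
            ρ * trJ J b (kadj J (V ∘L X - B₀) ∘L (V ∘L X - B₀))) ↔
      (∃ X : H →L[ℂ] H,
        (kadj J T ∘L T + (ρ : ℂ) • (kadj J V ∘L V)) ∘L X =
          (ρ : ℂ) • (kadj J V ∘L B₀)) :=
  stmt15_general J hJsa hJ2 b T V B₀ ρ hTtc hVtc hB₀tc hpos
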